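/- For every integer m ≥ 0 and every integer ℓ ≥ 1, r_{m,ℓ} = ∑_{k=0}^{ℓ} S(ℓ,k) · k! · C(m+k, k), where S(ℓ,k) is the Stirling number of the second kind and C(m+k,k) is the binomial coefficient. -/

import Mathlib

/-- `IsBPA m ℓ f` : `f` encodes a barred preferential arrangement of `[ℓ]` with `m` bars.
Each element of `[ℓ]` is assigned a section (one of the `m + 1` sections determined by the
`m` bars) together with a rank inside its section (ties are allowed: elements of the same
section with the same rank form a block); within each section the set of ranks actually used
must be an initial segment `{0, …, t-1}`, so that `f` determines, for each section, an
ordered partition of the elements assigned to it into nonempty blocks. -/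
def IsBPA (m ℓ : ℕ) (f : Fin ℓ → Fin (m + 1) × Fin ℓ) : Prop :=
  ∀ x : Fin ℓ, ∀ r : Fin ℓ, r < (f x).2 → ∃ y : Fin ℓ, (f y).1 = (f x).1 ∧ (f y).2 = r

instance (m ℓ : ℕ) : DecidablePred (IsBPA m ℓ) := fun f => by unfold IsBPA; infer_instance

/-- `bpa m ℓ` : the number of barred preferential arrangements of `[ℓ]` with `m` bars.
In particular `bpa 0 ℓ` is the number of preferential arrangements of `[ℓ]`
(the Fubini / ordered Bell number `r_ℓ`). -/
def bpa (m ℓ : ℕ) : ℕ :=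
  Fintype.card { f : Fin ℓ → Fin (m + 1) × Fin ℓ // IsBPA m ℓ f }

/-- The Stirling numbers of the second kind, `S(n, k)`: the number of partitions of an
`n`-element set into `k` nonempty blocks. -/
def stirling2 : ℕ → ℕ → ℕ
  | 0, 0 => 1
  | 0, _ + 1 => 0
  | _ + 1, 0 => 0
  | n + 1, k + 1 => (k + 1) * stirling2 n (k + 1) + stirling2 n k

/-!
A barred preferential arrangement `f : [ℓ] → [m+1] × [ℓ]` is the same thing as its image `T`
together with a surjection `[ℓ] → T`. The images that occur are exactly the sets `T` whose
fibres over the sections are initial segments; such a `T` is determined by the multiset of its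
first coordinates, so by stars and bars there are `C(m+k, k)` of them of size `k ≤ ℓ`, and each
receives `S(ℓ,k) · k!` surjections.
-/

open Finset Function Fintype

section Surjections

variable {α β : Type*} [Fintype α] [DecidableEq β]

def imageEqEquivSurjective (T : Finset β) :
    {f : α → β // univ.image f = T} ≃ {g : α → T // Surjective g} where
  toFun f := ⟨fun x => ⟨f.1 x, f.2.subset (mem_image_of_mem _ (mem_univ x))⟩, fun t => by
    obtain ⟨x, -, hx⟩ := mem_image.1 (f.2.symm.subset t.2)
    exact ⟨x, Subtype.ext hx⟩⟩
  invFun g := ⟨fun x => g.1 x, by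
    ext b
    refine ⟨fun hb => ?_, fun hb => ?_⟩
    · obtain ⟨x, -, rfl⟩ := mem_image.1 hb
      exact (g.1 x).2
    · obtain ⟨x, hx⟩ := g.2 ⟨b, hb⟩
      exact mem_image.2 ⟨x, mem_univ x, congrArg Subtype.val hx⟩⟩
  left_inv _ := rfl
  right_inv _ := rfl

variable [Fintype β]

lemma surjective_cons_iff {n : ℕ} {v : β} {g : Fin n → β} :
    Surjective (Fin.cons v g : Fin (n + 1) → β) ↔
      univ.image g = univ ∨ univ.image g = univ.erase v := by
  simp only [Surjective, Fin.exists_fin_succ, Fin.cons_zero, Fin.cons_succ, Finset.ext_iff,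
    mem_image, mem_univ, mem_erase, true_and, iff_true, and_true]
  constructor
  · intro h
    by_cases hv : ∃ i, g i = v
    · exact Or.inl fun b => (h b).elim (· ▸ hv) id
    · exact Or.inr fun b =>
        ⟨fun hb hbv => hv (hbv ▸ hb), fun hbv => (h b).resolve_left (Ne.symm hbv)⟩
  · rintro (h | h) b
    · exact Or.inr (h b)
    · exact (eq_or_ne v b).imp_right fun hbv => (h b).2 hbv.symm

lemma card_surjective_fin_succ (n : ℕ) :
    card {g : Fin (n + 1) → β // Surjective g} =
      ∑ v : β, (card {g : Fin n → β // univ.image g = univ} +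
        card {g : Fin n → β // univ.image g = univ.erase v}) := by
  rw [← card_congr ((Fin.consEquiv fun _ => β).subtypeEquiv fun _ => surjective_cons_iff.symm),
    card_congr (Equiv.subtypeProdEquivSigmaSubtype fun (v : β) (g : Fin n → β) =>
      univ.image g = univ ∨ univ.image g = univ.erase v), Fintype.card_sigma]
  refine sum_congr rfl fun v _ => card_subtype_or_disjoint _ _ ?_
  refine Pi.disjoint_iff.2 fun g => Prop.disjoint_iff.2 fun ⟨h, h'⟩ => ?_
  simpa using (h.symm.trans h').subset (mem_univ v)

theorem card_surjective_fin (n : ℕ) (β : Type*) [Fintype β] [DecidableEq β] :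
    card {g : Fin n → β // Surjective g} = stirling2 n (card β) * (card β).factorial := by
  induction n generalizing β with
  | zero =>
    rcases hβ : card β with _ | k
    · have : IsEmpty β := card_eq_zero_iff.1 hβ
      simp [Surjective, stirling2]
    · have : Nonempty β := card_pos_iff.1 (by omega)
      simp [Surjective, stirling2]
  | succ n ih =>
    have hcard (T : Finset β) :
        card {g : Fin n → β // univ.image g = T} = stirling2 n #T * (#T).factorial := by
      rw [card_congr (imageEqEquivSurjective T), ih, card_coe]
    simp only [card_surjective_fin_succ, hcard, card_univ, card_erase_of_mem (mem_univ _),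
      sum_const, smul_eq_mul]
    rcases card β with _ | k
    · simp [stirling2]
    · simp only [stirling2, Nat.factorial_succ, add_tsub_cancel_right]
      ring

variable [DecidableEq α]

theorem card_surjective :
    card {g : α → β // Surjective g} = stirling2 (card α) (card β) * (card β).factorial := by
  rw [← card_surjective_fin (card α) β]
  exact card_congr ((Equiv.arrowCongr (equivFin α) (Equiv.refl β)).subtypeEquiv fun g =>
    (Equiv.surjective_comp _ g).symm)

theorem card_subtype_image_eq_sum (P : Finset β → Prop) [DecidablePred P] :
    card {f : α → β // P (univ.image f)} =
      ∑ T : {T // P T}, stirling2 (card α) #T.1 * (#T.1).factorial := by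
  rw [← card_congr (Equiv.sigmaSubtypeFiberEquivSubtype (fun f : α → β => univ.image f)
      fun _ => Iff.rfl), Fintype.card_sigma]
  refine sum_congr rfl fun T _ => ?_
  rw [card_congr (imageEqEquivSurjective (α := α) T.1), card_surjective, card_coe]

theorem card_subtype_image_eq_sum_card (P : Finset β → Prop) [DecidablePred P] :
    card {f : α → β // P (univ.image f)} = ∑ k ∈ range (card α + 1),
      card {T // P T ∧ #T = k} * (stirling2 (card α) k * k.factorial) := by
  have hcard (f : α → β) : #(univ.image f) ∈ range (card α + 1) :=
    mem_range_succ_iff.2 (card_image_le.trans_eq card_univ)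
  rw [Fintype.card_subtype, card_eq_sum_card_fiberwise fun f _ => hcard f]
  refine sum_congr rfl fun k _ => ?_
  rw [filter_filter, ← Fintype.card_subtype, card_subtype_image_eq_sum fun T => P T ∧ #T = k,
    Fintype.sum_congr _ _ fun T => by rw [T.2.2], sum_const, card_univ, smul_eq_mul]

end Surjections

lemma Fin.mem_iff_lt_card_of_lt_mem {n : ℕ} {S : Finset (Fin n)}
    (hS : ∀ a ∈ S, ∀ b < a, b ∈ S) (r : Fin n) : r ∈ S ↔ (r : ℕ) < #S := by
  have hlower : IsLowerSet (S : Set (Fin n)) := fun a b hba ha =>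
    hba.eq_or_lt.elim (· ▸ ha) (hS a ha b)
  rcases hlower.eq_univ_or_Iio with h | ⟨a, h⟩
  · rw [coe_eq_univ.1 h]
    simp
  · rw [← coe_Iio, coe_inj] at h
    rw [h, mem_Iio, Fin.card_Iio, Fin.lt_def]

section FiberwiseLower

variable {ι κ : Type*}

def IsFiberwiseLower [LT κ] (T : Finset (ι × κ)) : Prop :=
  ∀ p ∈ T, ∀ r < p.2, (p.1, r) ∈ T

instance [DecidableEq ι] [Fintype κ] [DecidableEq κ] [LT κ] [DecidableLT κ] :
    DecidablePred (IsFiberwiseLower : Finset (ι × κ) → Prop) := fun T => by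
  unfold IsFiberwiseLower; infer_instance

lemma isBPA_iff_isFiberwiseLower_image {m ℓ : ℕ} {f : Fin ℓ → Fin (m + 1) × Fin ℓ} :
    IsBPA m ℓ f ↔ IsFiberwiseLower (univ.image f) := by
  rw [IsFiberwiseLower, forall_mem_image]
  simp only [IsBPA, mem_univ, forall_const, mem_image, true_and, Prod.ext_iff]

lemma count_map_fst_val [DecidableEq ι] [Fintype κ] [DecidableEq κ] (T : Finset (ι × κ))
    (i : ι) :
    (T.val.map Prod.fst).count i = #{r | (i, r) ∈ T} := by
  rw [Multiset.count_map, ← filter_val, card_val]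
  refine card_nbij' Prod.snd (fun r => (i, r)) ?_ ?_ ?_ ?_ <;>
    simp +contextual [Set.MapsTo, Set.LeftInvOn, Set.RightInvOn]

variable [DecidableEq ι] {n : ℕ}

lemma IsFiberwiseLower.mem_iff_lt_count {T : Finset (ι × Fin n)} (hT : IsFiberwiseLower T)
    (i : ι) (r : Fin n) : (i, r) ∈ T ↔ (r : ℕ) < (T.val.map Prod.fst).count i := by
  rw [count_map_fst_val]
  refine (by simp : (i, r) ∈ T ↔ r ∈ _).trans
    (Fin.mem_iff_lt_card_of_lt_mem (fun a ha b hb => ?_) r)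
  simp only [mem_filter, mem_univ, true_and] at ha ⊢
  exact hT _ ha b hb

lemma map_fst_filter_lt_count [Fintype ι] {s : Multiset ι} (hs : Multiset.card s ≤ n) :
    (univ.filter fun p : ι × Fin n => (p.2 : ℕ) < s.count p.1).val.map Prod.fst = s := by
  refine Multiset.ext.2 fun i => ?_
  rw [count_map_fst_val]
  simp only [mem_filter, mem_univ, true_and]
  rw [Fin.card_filter_val_lt, min_eq_right ((s.count_le_card i).trans hs)]

def fiberwiseLowerEquivSym [Fintype ι] {k : ℕ} (hk : k ≤ n) :
    {T : Finset (ι × Fin n) // IsFiberwiseLower T ∧ #T = k} ≃ Sym ι k where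
  toFun T := ⟨T.1.val.map Prod.fst, by rw [Multiset.card_map, card_val, T.2.2]⟩
  invFun s := ⟨univ.filter fun p => (p.2 : ℕ) < s.1.count p.1,
    fun p hp r hr => by simp only [mem_filter, mem_univ, true_and] at hp ⊢; omega, by
    rw [← card_val, ← Multiset.card_map Prod.fst, map_fst_filter_lt_count (s.2.trans_le hk),
      s.2]⟩
  left_inv T := Subtype.ext <| Finset.ext fun p => by simp [T.2.1.mem_iff_lt_count]
  right_inv s := Subtype.ext (map_fst_filter_lt_count (s.2.trans_le hk))

theorem card_isFiberwiseLower [Fintype ι] {k : ℕ} (hk : k ≤ n) :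
    card {T : Finset (ι × Fin n) // IsFiberwiseLower T ∧ #T = k} =
      (card ι + k - 1).choose k := by
  rw [card_congr (fiberwiseLowerEquivSym hk), Sym.card_sym_eq_choose]

end FiberwiseLower

theorem bpa_eq_sum_stirling2_general (m ℓ : ℕ) :
    bpa m ℓ =
      ∑ k ∈ Finset.range (ℓ + 1), stirling2 ℓ k * Nat.factorial k * Nat.choose (m + k) k := by
  have hbpa : bpa m ℓ =
      card {f : Fin ℓ → Fin (m + 1) × Fin ℓ // IsFiberwiseLower (univ.image f)} :=
    card_congr (Equiv.subtypeEquivRight fun _ => isBPA_iff_isFiberwiseLower_image)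
  rw [hbpa, card_subtype_image_eq_sum_card, Fintype.card_fin]
  refine sum_congr rfl fun k hk => ?_
  rw [card_isFiberwiseLower (mem_range_succ_iff.1 hk), Fintype.card_fin,
    show m + 1 + k - 1 = m + k by omega]
  ring

/-- For every `m ≥ 0` and `ℓ ≥ 1`,
`r_{m,ℓ} = ∑_{k=0}^{ℓ} S(ℓ,k) · k! · C(m+k, k)`. -/
theorem bpa_eq_sum_stirling2 (m ℓ : ℕ) (hℓ : 1 ≤ ℓ) :
    bpa m ℓ =
      ∑ k ∈ Finset.range (ℓ + 1), stirling2 ℓ k * Nat.factorial k * Nat.choose (m + k) k :=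
  bpa_eq_sum_stirling2_general m ℓ
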